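/- arXiv:2310.03947 — 5 statements merged into one kernel-verified Lean document; each statement's English description precedes it below -/
import Mathlib

section
/- Let X be a Hilbert space and f : X → (-∞, ∞] a proper, lower semicontinuous, convex function with nonempty solution set S = argmin f. Let x̄ ∈ S and f* = f(x̄). Suppose there exist r > 0, η > 0 and a desingularizing function φ ∈ C[0,η) ∩ C¹(0,η) with φ(0) = 0, φ concave, φ' > 0 on (0,η), such that φ'(f(x) - f*) · d(0, ∂f(x)) ≥ 1 for all x ∈ B_r(x̄) with f* < f(x) < f* + η. Then d(x, S) ≤ 2 φ(f(x) - f*) for all x ∈ B_r(x̄) with f* ≤ f(x) < f* + η. -/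
open Metric Set Filter Topology

/-!
Run the proximal point method `xₙ₊₁ = prox_{λf}(xₙ)` from `x₀ = x`, with `t₀ = f x - f*` and
`λ = φ(t₀)² / (4 t₀)`. The proximal point exists because `f + ‖· - y‖² / (2λ)` is strongly
midpoint convex, so its minimizing sequences are Cauchy. Since `(xₙ - xₙ₊₁) / λ ∈ ∂f(xₙ₊₁)`, the
iterates are Fejér monotone with respect to `x̄` (hence stay in the ball), each step decreases `f`
by `aₙ² / λ` where `aₙ = ‖xₙ - xₙ₊₁‖`, and the KL inequality gives `λ ≤ φ'(tₙ₊₁) aₙ`.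
With the supporting line of the concave `φ` this yields `aₙ₊₁² ≤ aₙ (φ(tₙ₊₁) - φ(tₙ₊₂))`, so by
AM–GM `2 aₙ₊₁ ≤ aₙ + φ(tₙ₊₁) - φ(tₙ₊₂)`, and telescoping bounds the total length by
`2 a₀ + φ(t₁) ≤ 2 φ(t₀)`. The iterates thus converge to some `z` with `‖x - z‖ ≤ 2 φ(t₀)`, and
`z` is a minimizer by lower semicontinuity, because `tₙ₊₁ ≤ aₙ ‖x - x̄‖ / λ → 0`.
-/

theorem ConcaveOn.le_add_mul_sub_of_hasDerivAt {S : Set ℝ} {φ : ℝ → ℝ} {x y d : ℝ}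
    (hφ : ConcaveOn ℝ S φ) (hx : x ∈ S) (hy : y ∈ S) (hd : HasDerivAt φ d x) :
    φ y ≤ φ x + d * (y - x) := by
  rcases lt_trichotomy y x with hyx | rfl | hxy
  · have h := hφ.le_slope_of_hasDerivAt hy hx hyx hd
    rw [slope_def_field, le_div_iff₀ (sub_pos.2 hyx)] at h
    nlinarith
  · simp
  · have h := hφ.slope_le_of_hasDerivAt hx hy hxy hd
    rw [slope_def_field, div_le_iff₀ (sub_pos.2 hxy)] at h
    nlinarith

theorem sum_range_le_of_two_mul_succ_le {a Φ : ℕ → ℝ} (ha : ∀ n, 0 ≤ a n) (hΦ : ∀ n, 0 ≤ Φ n)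
    (h : ∀ n, 2 * a (n + 1) ≤ a n + (Φ n - Φ (n + 1))) (N : ℕ) :
    ∑ k ∈ Finset.range N, a k ≤ 2 * a 0 + Φ 0 := by
  have key : ∀ N, ∑ k ∈ Finset.range (N + 1), a k + a N + Φ N ≤ 2 * a 0 + Φ 0 := by
    intro N
    induction N with
    | zero => simp only [zero_add, Finset.sum_range_one]; linarith
    | succ N ih =>
      rw [Finset.sum_range_succ]
      linarith [h N]
  cases N with
  | zero => simpa using add_nonneg (mul_nonneg zero_le_two (ha 0)) (hΦ 0)
  | succ N => linarith [key N, ha N, hΦ N]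

structure IsDesingularizing (φ φ' : ℝ → ℝ) (η : ℝ) : Prop where
  map_zero : φ 0 = 0
  concaveOn : ConcaveOn ℝ (Ico 0 η) φ
  hasDerivAt : ∀ s ∈ Ioo 0 η, HasDerivAt φ (φ' s) s
  deriv_pos : ∀ s ∈ Ioo 0 η, 0 < φ' s

namespace IsDesingularizing

variable {φ φ' : ℝ → ℝ} {η : ℝ}

theorem deriv_mul_sub_le (hφ : IsDesingularizing φ φ' η) {s u : ℝ} (hs : s ∈ Ioo 0 η)
    (hu : u ∈ Ico 0 η) : φ' s * (s - u) ≤ φ s - φ u := by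
  have := hφ.concaveOn.le_add_mul_sub_of_hasDerivAt (Ioo_subset_Ico_self hs) hu
    (hφ.hasDerivAt s hs)
  linarith

theorem pos (hφ : IsDesingularizing φ φ' η) {s : ℝ} (hs : s ∈ Ioo 0 η) : 0 < φ s := by
  have := hφ.deriv_mul_sub_le hs ⟨le_rfl, hs.1.trans hs.2⟩
  rw [hφ.map_zero, sub_zero] at this
  nlinarith [hφ.deriv_pos s hs, hs.1]

theorem nonneg (hφ : IsDesingularizing φ φ' η) {s : ℝ} (hs : s ∈ Ico 0 η) : 0 ≤ φ s := by
  rcases hs.1.eq_or_lt with rfl | h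
  · exact hφ.map_zero.ge
  · exact (hφ.pos ⟨h, hs.2⟩).le

theorem monotoneOn (hφ : IsDesingularizing φ φ' η) : MonotoneOn φ (Ico 0 η) := by
  intro u hu s hs hus
  rcases hs.1.eq_or_lt with rfl | h
  · rw [le_antisymm hus hu.1]
  · nlinarith [hφ.deriv_mul_sub_le ⟨h, hs.2⟩ hu, hφ.deriv_pos s ⟨h, hs.2⟩]

theorem sum_range_le {t a : ℕ → ℝ} {lam : ℝ} (hφ : IsDesingularizing φ φ' η) (hlam : 0 < lam)
    (ht : ∀ n, 0 ≤ t n) (ht0 : t 0 < η) (ha : ∀ n, 0 ≤ a n)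
    (hdesc : ∀ n, a n ^ 2 ≤ lam * (t n - t (n + 1)))
    (hKL : ∀ n, t (n + 1) ∈ Ioo 0 η → lam ≤ φ' (t (n + 1)) * a n)
    (hlam_le : 4 * lam * t 0 ≤ φ (t 0) ^ 2) (N : ℕ) :
    ∑ k ∈ Finset.range N, a k ≤ 2 * φ (t 0) := by
  have hanti : Antitone t :=
    antitone_nat_of_succ_le fun n => by nlinarith [hdesc n, sq_nonneg (a n)]
  have hmem : ∀ n, t n ∈ Ico 0 η := fun n => ⟨ht n, (hanti n.zero_le).trans_lt ht0⟩
  have hstep : ∀ n, 2 * a (n + 1) ≤ a n + (φ (t (n + 1)) - φ (t (n + 2))) := by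
    intro n
    rcases (ht (n + 1)).eq_or_lt with h0 | hpos
    · have ht2 : t (n + 2) = 0 := le_antisymm (h0 ▸ hanti (n + 1).le_succ) (ht _)
      have ha1 : a (n + 1) = 0 := by
        have := hdesc (n + 1)
        rw [← h0, ht2, sub_zero, mul_zero] at this
        exact pow_eq_zero_iff two_ne_zero |>.1 (le_antisymm this (sq_nonneg _))
      rw [ha1, ← h0, ht2]
      linarith [ha n]
    · have hs : t (n + 1) ∈ Ioo 0 η := ⟨hpos, (hmem _).2⟩
      have hΔ := hφ.deriv_mul_sub_le hs (hmem (n + 2))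
      have hdrop : 0 ≤ t (n + 1) - t (n + 2) := sub_nonneg.2 (hanti (n + 1).le_succ)
      refine two_mul_le_add_of_sq_le_mul (ha n)
        ((mul_nonneg (hφ.deriv_pos _ hs).le hdrop).trans hΔ) ?_
      calc a (n + 1) ^ 2 ≤ lam * (t (n + 1) - t (n + 2)) := hdesc _
        _ ≤ φ' (t (n + 1)) * a n * (t (n + 1) - t (n + 2)) :=
          mul_le_mul_of_nonneg_right (hKL n hs) hdrop
        _ ≤ a n * (φ (t (n + 1)) - φ (t (n + 2))) := by
          rw [mul_right_comm, mul_comm]; exact mul_le_mul_of_nonneg_left hΔ (ha n)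
  have ha0 : 2 * a 0 ≤ φ (t 0) := by
    have h := hdesc 0
    nlinarith [ha 0, hφ.nonneg (hmem 0), ht 1]
  calc ∑ k ∈ Finset.range N, a k ≤ 2 * a 0 + φ (t 1) :=
        sum_range_le_of_two_mul_succ_le ha (fun n => hφ.nonneg (hmem (n + 1))) hstep N
    _ ≤ φ (t 0) + φ (t 0) :=
      add_le_add ha0 (hφ.monotoneOn (hmem 1) (hmem 0) (hanti zero_le_one))
    _ = 2 * φ (t 0) := by ring

end IsDesingularizing

theorem LowerSemicontinuous.le_of_tendsto {α ι γ : Type*} [TopologicalSpace α] [LinearOrder γ]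
    [TopologicalSpace γ] [OrderTopology γ] [DenselyOrdered γ] {F : α → γ}
    (hF : LowerSemicontinuous F) {l : Filter ι} [l.NeBot] {u : ι → α} {v : ι → γ} {p : α} {m : γ}
    (hu : Tendsto u l (𝓝 p)) (hv : Tendsto v l (𝓝 m)) (huv : ∀ i, F (u i) ≤ v i) : F p ≤ m := by
  by_contra! h
  obtain ⟨b, hmb, hbp⟩ := exists_between h
  obtain ⟨i, hbi, hib⟩ :=
    ((hu.eventually (hF p b hbp)).and (hv.eventually (gt_mem_nhds hmb))).exists
  exact (hbi.trans_le (huv i)).not_gt hib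

theorem nonneg_of_forall_nonneg_add_mul {A B : ℝ} (h : ∀ t ∈ Ioc (0 : ℝ) 1, 0 ≤ A + t * B) :
    0 ≤ A := by
  have hlim : Tendsto (fun t : ℝ => A + t * B) (𝓝[>] 0) (𝓝 A) := by
    have : Continuous fun t : ℝ => A + t * B := by fun_prop
    simpa using (this.tendsto 0).mono_left nhdsWithin_le_nhds
  exact ge_of_tendsto hlim (eventually_of_mem (Ioc_mem_nhdsGT zero_lt_one) h)

theorem exists_forall_le_of_midpoint_le {X : Type*} [NormedAddCommGroup X] [NormedSpace ℝ X]
    [CompleteSpace X] {F : X → EReal} {m c : ℝ} (hF : LowerSemicontinuous F)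
    (hm : ∀ z, (m : EReal) ≤ F z) (hdom : ∃ z, F z ≠ ⊤) (hc : 0 < c)
    (hmid : ∀ x y (a b : ℝ), F x ≤ a → F y ≤ b →
      F (midpoint ℝ x y) ≤ ((a + b) / 2 - c * dist x y ^ 2 : ℝ)) :
    ∃ p, ∀ z, F p ≤ F z := by
  obtain ⟨z₀, hz₀⟩ := hdom
  obtain ⟨M, hM⟩ : ∃ M : ℝ, ⨅ z, F z = M :=
    ⟨_, (EReal.coe_toReal (ne_top_of_le_ne_top hz₀ (iInf_le _ z₀))
      (ne_bot_of_le_ne_bot (EReal.coe_ne_bot m) (le_iInf hm))).symm⟩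
  have hMle : ∀ z, (M : EReal) ≤ F z := fun z => hM ▸ iInf_le F z
  set δ : ℕ → ℝ := fun n => c * (1 / (n + 1)) ^ 2
  have hδ : ∀ n, 0 < δ n := fun n => by positivity
  have hseq : ∀ n, ∃ z, F z ≤ ((M + δ n : ℝ) : EReal) := fun n =>
    (iInf_lt_iff.1 (hM ▸ EReal.coe_lt_coe_iff.2 (lt_add_of_pos_right M (hδ n)))).imp
      fun _ h => h.le
  choose z hz using hseq
  have hpair : ∀ n k, c * dist (z n) (z k) ^ 2 ≤ (δ n + δ k) / 2 := by
    intro n k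
    have := (hMle _).trans (hmid _ _ _ _ (hz n) (hz k))
    rw [EReal.coe_le_coe_iff] at this
    linarith
  have hcauchy : CauchySeq z := by
    refine cauchySeq_of_le_tendsto_0 (fun N => 1 / ((N : ℝ) + 1)) (fun n k N hn hk => ?_)
      tendsto_one_div_add_atTop_nhds_zero_nat
    have hδN : ∀ n, N ≤ n → δ n ≤ δ N := fun n hn => by
      simp only [δ]; gcongr
    have : dist (z n) (z k) ^ 2 ≤ (1 / ((N : ℝ) + 1)) ^ 2 := by
      have := hpair n k
      nlinarith [hδN n hn, hδN k hk]
    exact (pow_le_pow_iff_left₀ dist_nonneg (by positivity) two_ne_zero).1 this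
  obtain ⟨p, hp⟩ := cauchySeq_tendsto_of_complete hcauchy
  have hδlim : Tendsto (fun n => ((M + δ n : ℝ) : EReal)) atTop (𝓝 (M : EReal)) := by
    refine EReal.tendsto_coe.2 ?_
    simpa [δ] using tendsto_const_nhds.add
      ((tendsto_one_div_add_atTop_nhds_zero_nat.pow 2).const_mul c)
  have hpM : F p ≤ M := hF.le_of_tendsto hp hδlim hz
  exact ⟨p, fun w => hpM.trans (hMle w)⟩

theorem EReal.le_toReal_of_coe_le {m : ℝ} {e : EReal} (h : (m : EReal) ≤ e) (he : e ≠ ⊤) :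
    m ≤ e.toReal :=
  EReal.toReal_coe m ▸ EReal.toReal_le_toReal h (EReal.coe_ne_bot m) he

section Convex

variable {X : Type*}

def ConvexEReal [AddCommGroup X] [Module ℝ X] (f : X → EReal) : Prop :=
  ∀ x y : X, ∀ t : ℝ, 0 ≤ t → t ≤ 1 →
    f (t • x + (1 - t) • y) ≤ (t : EReal) * f x + ((1 - t : ℝ) : EReal) * f y

def IsSubgradient [NormedAddCommGroup X] [InnerProductSpace ℝ X] (f : X → EReal) (ξ x : X) :
    Prop :=
  ∀ y, f x + ((inner ℝ ξ (y - x) : ℝ) : EReal) ≤ f y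

theorem ConvexEReal.le_coe [AddCommGroup X] [Module ℝ X] {f : X → EReal} (hf : ConvexEReal f)
    {x y : X} {a b t : ℝ} (hx : f x ≤ a) (hy : f y ≤ b) (ht₀ : 0 ≤ t) (ht₁ : t ≤ 1) :
    f (t • x + (1 - t) • y) ≤ ((t * a + (1 - t) * b : ℝ) : EReal) := by
  refine (hf x y t ht₀ ht₁).trans ?_
  rw [EReal.coe_add, EReal.coe_mul, EReal.coe_mul]
  gcongr

variable [NormedAddCommGroup X] [InnerProductSpace ℝ X] {f : X → EReal}

theorem IsSubgradient.ne_top {ξ x y : X} (h : IsSubgradient f ξ x) (hy : f y ≠ ⊤) : f x ≠ ⊤ := by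
  intro hx
  have := h y
  rw [hx, EReal.top_add_coe, top_le_iff] at this
  exact hy this

theorem IsSubgradient.toReal_add_inner_le {ξ x y : X} (h : IsSubgradient f ξ x) (hx : f x ≠ ⊥)
    (hy : f y ≠ ⊤) : (f x).toReal + inner ℝ ξ (y - x) ≤ (f y).toReal := by
  have := h y
  rw [← EReal.coe_toReal (h.ne_top hy) hx, ← EReal.coe_add] at this
  exact EReal.toReal_coe _ ▸ EReal.toReal_le_toReal this (EReal.coe_ne_bot _) hy

theorem ConvexEReal.isSubgradient_of_forall_le {m lam : ℝ} (hf : ConvexEReal f)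
    (hm : ∀ z, (m : EReal) ≤ f z) (hlam : 0 < lam) {y p : X}
    (hp : ∀ z, f p + ((dist p y ^ 2 / (2 * lam) : ℝ) : EReal) ≤
      f z + ((dist z y ^ 2 / (2 * lam) : ℝ) : EReal)) :
    IsSubgradient f (lam⁻¹ • (y - p)) p := by
  intro w
  rcases eq_or_ne (f w) ⊤ with hw | hw
  · simp [hw]
  have hne_bot : ∀ z, f z ≠ ⊥ := fun z => ne_bot_of_le_ne_bot (EReal.coe_ne_bot m) (hm z)
  have hpw := hp w
  have hp_top : f p ≠ ⊤ := by
    intro h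
    rw [h, EReal.top_add_coe, top_le_iff] at hpw
    exact EReal.add_ne_top hw (EReal.coe_ne_top _) hpw
  set gp := (f p).toReal
  set gw := (f w).toReal
  have hgp : f p = gp := (EReal.coe_toReal hp_top (hne_bot p)).symm
  have hgw : f w = gw := (EReal.coe_toReal hw (hne_bot w)).symm
  have key : ∀ t ∈ Ioc (0 : ℝ) 1,
      0 ≤ (2 * lam * (gw - gp) + 2 * inner ℝ (p - y) (w - p)) + t * ‖w - p‖ ^ 2 := by
    intro t ht
    have h := (hp (t • w + (1 - t) • p)).trans
      (add_le_add_left (hf.le_coe hgw.le hgp.le ht.1.le ht.2) _)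
    rw [hgp, ← EReal.coe_add, ← EReal.coe_add, EReal.coe_le_coe_iff] at h
    have hexp : dist (t • w + (1 - t) • p) y ^ 2 =
        dist p y ^ 2 + 2 * t * inner ℝ (p - y) (w - p) + t ^ 2 * ‖w - p‖ ^ 2 := by
      rw [dist_eq_norm, dist_eq_norm,
        show t • w + (1 - t) • p - y = (p - y) + t • (w - p) by module, norm_add_sq_real,
        inner_smul_right, norm_smul, mul_pow, Real.norm_eq_abs, sq_abs]
      ring
    rw [hexp] at h
    have : 0 ≤ t * ((2 * lam * (gw - gp) + 2 * inner ℝ (p - y) (w - p)) + t * ‖w - p‖ ^ 2) := by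
      field_simp at h
      nlinarith
    exact (mul_nonneg_iff_of_pos_left ht.1).1 this
  have hA := nonneg_of_forall_nonneg_add_mul key
  rw [hgp, hgw, ← EReal.coe_add, EReal.coe_le_coe_iff, inner_smul_left,
    ← neg_sub p y, inner_neg_left]
  simp only [RCLike.conj_to_real]
  field_simp
  nlinarith

theorem ConvexEReal.exists_isSubgradient_prox [CompleteSpace X] {m lam : ℝ} (hf : ConvexEReal f)
    (hlsc : LowerSemicontinuous f) (hm : ∀ z, (m : EReal) ≤ f z) (hdom : ∃ z, f z ≠ ⊤)
    (hlam : 0 < lam) (y : X) : ∃ p, IsSubgradient f (lam⁻¹ • (y - p)) p := by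
  set q : X → ℝ := fun z => dist z y ^ 2 / (2 * lam)
  have hsub : ∀ z (a : ℝ), f z + (q z : EReal) ≤ a → f z ≤ ((a - q z : ℝ) : EReal) := by
    intro z a h
    rw [EReal.coe_sub]
    exact (EReal.le_sub_iff_add_le (Or.inl (EReal.coe_ne_bot _))
      (Or.inl (EReal.coe_ne_top _))).2 h
  have hmid : ∀ x z (a b : ℝ), f x + (q x : EReal) ≤ a → f z + (q z : EReal) ≤ b →
      f (midpoint ℝ x z) + (q (midpoint ℝ x z) : EReal) ≤
        ((a + b) / 2 - 1 / (8 * lam) * dist x z ^ 2 : ℝ) := by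
    intro x z a b hx hz
    have h := hf.le_coe (hsub x a hx) (hsub z b hz) (t := 1 / 2) (by norm_num) (by norm_num)
    rw [show (1 / 2 : ℝ) • x + (1 - 1 / 2 : ℝ) • z = midpoint ℝ x z by
      rw [midpoint_eq_smul_add]; norm_num] at h
    have hapollonius :=
      EuclideanGeometry.dist_sq_add_dist_sq_eq_two_mul_dist_midpoint_sq_add_half_dist_sq y x z
    refine (add_le_add_left h _).trans_eq ?_
    rw [← EReal.coe_add]
    congr 1
    simp only [q, dist_comm _ y]
    field_simp
    nlinarith
  obtain ⟨p, hp⟩ := exists_forall_le_of_midpoint_le (F := fun z => f z + (q z : EReal))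
    (hlsc.add' (continuous_coe_real_ereal.comp (by fun_prop)).lowerSemicontinuous fun z =>
      EReal.continuousAt_add (Or.inr (EReal.coe_ne_bot _)) (Or.inr (EReal.coe_ne_top _)))
    (fun z => (hm z).trans (le_add_of_nonneg_right (EReal.coe_nonneg.2 (by positivity))))
    (hdom.imp fun z hz => EReal.add_ne_top hz (EReal.coe_ne_top _)) (by positivity) hmid
  exact ⟨p, hf.isSubgradient_of_forall_le hm hlam hp⟩

end Convex

section ProximalSeq

variable {X : Type*} [NormedAddCommGroup X] [InnerProductSpace ℝ X] {f : X → EReal}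

/-- `x (n + 1) = prox_{lam f} (x n)`, stated through the optimality condition of the proximal
step. -/
def IsProximalSeq (f : X → EReal) (lam : ℝ) (x : ℕ → X) : Prop :=
  ∀ n, IsSubgradient f (lam⁻¹ • (x n - x (n + 1))) (x (n + 1))

namespace IsProximalSeq

variable {lam m : ℝ} {x : ℕ → X} {xb : X}

theorem ne_top (hx : IsProximalSeq f lam x) (h0 : f (x 0) ≠ ⊤) (n : ℕ) : f (x n) ≠ ⊤ := by
  induction n with
  | zero => exact h0
  | succ n ih => exact (hx n).ne_top ih

theorem le_toReal_succ (hx : IsProximalSeq f lam x) (hm : ∀ z, (m : EReal) ≤ f z)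
    (hxb : f xb = m) (n : ℕ) : m ≤ (f (x (n + 1))).toReal :=
  EReal.le_toReal_of_coe_le (hm _) ((hx n).ne_top (hxb ▸ EReal.coe_ne_top m))

theorem dist_sq_le (hx : IsProximalSeq f lam x) (hm : ∀ z, (m : EReal) ≤ f z) (hlam : 0 < lam)
    (h0 : f (x 0) ≠ ⊤) (n : ℕ) :
    dist (x n) (x (n + 1)) ^ 2 ≤ lam * ((f (x n)).toReal - (f (x (n + 1))).toReal) := by
  have h := (hx n).toReal_add_inner_le (ne_bot_of_le_ne_bot (EReal.coe_ne_bot m) (hm _))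
    (hx.ne_top h0 n)
  rw [inner_smul_left, real_inner_self_eq_norm_sq, ← dist_eq_norm] at h
  simp only [RCLike.conj_to_real] at h
  rw [← div_eq_inv_mul] at h
  rw [← le_sub_iff_add_le', div_le_iff₀ hlam] at h
  linarith

theorem toReal_sub_le_inner (hx : IsProximalSeq f lam x) (hm : ∀ z, (m : EReal) ≤ f z)
    (hxb : f xb = m) (n : ℕ) :
    (f (x (n + 1))).toReal - m ≤ lam⁻¹ * inner ℝ (x n - x (n + 1)) (x (n + 1) - xb) := by
  have h := (hx n).toReal_add_inner_le (ne_bot_of_le_ne_bot (EReal.coe_ne_bot m) (hm _))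
    (hxb ▸ EReal.coe_ne_top m)
  rw [hxb, EReal.toReal_coe, inner_smul_left, ← neg_sub (x (n + 1)) xb, inner_neg_right] at h
  simp only [RCLike.conj_to_real] at h
  linarith

theorem dist_succ_le (hx : IsProximalSeq f lam x) (hm : ∀ z, (m : EReal) ≤ f z) (hlam : 0 < lam)
    (hxb : f xb = m) (n : ℕ) : dist (x (n + 1)) xb ≤ dist (x n) xb := by
  have hinner : 0 ≤ inner ℝ (x n - x (n + 1)) (x (n + 1) - xb) :=
    (mul_nonneg_iff_of_pos_left (inv_pos.2 hlam)).1
      (by linarith [hx.toReal_sub_le_inner hm hxb n, hx.le_toReal_succ hm hxb n])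
  have hsq := norm_add_sq_real (x n - x (n + 1)) (x (n + 1) - xb)
  rw [sub_add_sub_cancel, ← dist_eq_norm (x n) xb, ← dist_eq_norm (x (n + 1)) xb] at hsq
  exact (pow_le_pow_iff_left₀ dist_nonneg dist_nonneg two_ne_zero).1
    (by nlinarith [norm_nonneg (x n - x (n + 1))])

theorem dist_le (hx : IsProximalSeq f lam x) (hm : ∀ z, (m : EReal) ≤ f z) (hlam : 0 < lam)
    (hxb : f xb = m) (n : ℕ) : dist (x n) xb ≤ dist (x 0) xb := by
  induction n with
  | zero => exact le_rfl
  | succ n ih => exact (hx.dist_succ_le hm hlam hxb n).trans ih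

theorem toReal_sub_le_mul_dist (hx : IsProximalSeq f lam x) (hm : ∀ z, (m : EReal) ≤ f z)
    (hlam : 0 < lam) (hxb : f xb = m) (n : ℕ) :
    (f (x (n + 1))).toReal - m ≤ lam⁻¹ * dist (x n) (x (n + 1)) * dist (x 0) xb := by
  calc (f (x (n + 1))).toReal - m
      ≤ lam⁻¹ * inner ℝ (x n - x (n + 1)) (x (n + 1) - xb) := hx.toReal_sub_le_inner hm hxb n
    _ ≤ lam⁻¹ * (dist (x n) (x (n + 1)) * dist (x (n + 1)) xb) := by
      rw [dist_eq_norm, dist_eq_norm]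
      exact mul_le_mul_of_nonneg_left (real_inner_le_norm _ _) (inv_pos.2 hlam).le
    _ ≤ lam⁻¹ * dist (x n) (x (n + 1)) * dist (x 0) xb := by
      rw [mul_assoc]
      gcongr
      exact hx.dist_le hm hlam hxb _

theorem exists_dist_le [CompleteSpace X] (hx : IsProximalSeq f lam x)
    (hlsc : LowerSemicontinuous f) (hm : ∀ z, (m : EReal) ≤ f z) (hlam : 0 < lam)
    (hxb : f xb = m) {L : ℝ} (hlen : ∀ N, ∑ k ∈ Finset.range N, dist (x k) (x (k + 1)) ≤ L) :
    ∃ z, (∀ y, f z ≤ f y) ∧ dist (x 0) z ≤ L := by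
  have hsum : Summable fun n => dist (x n) (x (n + 1)) :=
    summable_of_sum_range_le (fun _ => dist_nonneg) hlen
  obtain ⟨z, hz⟩ := cauchySeq_tendsto_of_complete (cauchySeq_of_summable_dist hsum)
  refine ⟨z, fun y => ?_,
    (dist_le_tsum_dist_of_tendsto₀ hsum hz).trans (hsum.tsum_le_of_sum_range_le hlen)⟩
  have hval : Tendsto (fun n => (f (x (n + 1))).toReal) atTop (𝓝 m) := by
    have hbound : Tendsto (fun n => m + lam⁻¹ * dist (x n) (x (n + 1)) * dist (x 0) xb) atTop
        (𝓝 m) := by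
      simpa using tendsto_const_nhds.add
        ((hsum.tendsto_atTop_zero.const_mul lam⁻¹).mul_const (dist (x 0) xb))
    exact tendsto_of_tendsto_of_tendsto_of_le_of_le tendsto_const_nhds hbound
      (hx.le_toReal_succ hm hxb) fun n => by linarith [hx.toReal_sub_le_mul_dist hm hlam hxb n]
  have hzm : f z ≤ m := hlsc.le_of_tendsto (hz.comp (tendsto_add_atTop_nat 1))
    (EReal.tendsto_coe.2 hval)
    fun n => EReal.le_coe_toReal ((hx n).ne_top (hxb ▸ EReal.coe_ne_top m))
  exact hzm.trans (hm y)

theorem sum_range_dist_le (hx : IsProximalSeq f lam x) (hm : ∀ z, (m : EReal) ≤ f z)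
    (hlam : 0 < lam) (h0 : f (x 0) ≠ ⊤) {φ φ' : ℝ → ℝ} {η : ℝ}
    (hφ : IsDesingularizing φ φ' η) {U : Set X} (hU : ∀ n, x n ∈ U)
    (hKL : ∀ y ∈ U, (m : EReal) < f y → f y < (m : EReal) + η →
      ∀ ξ, IsSubgradient f ξ y → 1 ≤ φ' ((f y).toReal - m) * ‖ξ‖)
    (ht0 : (f (x 0)).toReal - m < η)
    (hlam_le : 4 * lam * ((f (x 0)).toReal - m) ≤ φ ((f (x 0)).toReal - m) ^ 2) (N : ℕ) :
    ∑ k ∈ Finset.range N, dist (x k) (x (k + 1)) ≤ 2 * φ ((f (x 0)).toReal - m) := by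
  have hval : ∀ n, f (x n) = (f (x n)).toReal := fun n =>
    (EReal.coe_toReal (hx.ne_top h0 n) (ne_bot_of_le_ne_bot (EReal.coe_ne_bot m) (hm _))).symm
  refine hφ.sum_range_le (t := fun n => (f (x n)).toReal - m) hlam
    (fun n => sub_nonneg.2 (EReal.le_toReal_of_coe_le (hm _) (hx.ne_top h0 n))) ht0
    (fun _ => dist_nonneg) (fun n => by linarith [hx.dist_sq_le hm hlam h0 n]) (fun n hn => ?_)
    hlam_le N
  have h := hKL _ (hU (n + 1))
    (by rw [hval]; exact EReal.coe_lt_coe_iff.2 (by linarith [hn.1]))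
    (by rw [hval, ← EReal.coe_add]; exact EReal.coe_lt_coe_iff.2 (by linarith [hn.2])) _ (hx n)
  rw [norm_smul, norm_inv, Real.norm_of_nonneg hlam.le, ← dist_eq_norm] at h
  calc lam = lam * 1 := (mul_one lam).symm
    _ ≤ lam * (φ' ((f (x (n + 1))).toReal - m) * (lam⁻¹ * dist (x n) (x (n + 1)))) :=
      mul_le_mul_of_nonneg_left h hlam.le
    _ = φ' ((f (x (n + 1))).toReal - m) * dist (x n) (x (n + 1)) := by field_simp

end IsProximalSeq

end ProximalSeq

theorem ConvexEReal.exists_minimizer_dist_le {X : Type*} [NormedAddCommGroup X]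
    [InnerProductSpace ℝ X] [CompleteSpace X] {f : X → EReal} {m η r : ℝ} {xb x : X}
    {φ φ' : ℝ → ℝ} (hf : ConvexEReal f) (hlsc : LowerSemicontinuous f)
    (hm : ∀ z, (m : EReal) ≤ f z) (hxb : f xb = m) (hφ : IsDesingularizing φ φ' η)
    (hKL : ∀ y ∈ ball xb r, (m : EReal) < f y → f y < (m : EReal) + η →
      ∀ ξ, IsSubgradient f ξ y → 1 ≤ φ' ((f y).toReal - m) * ‖ξ‖)
    (hx : x ∈ ball xb r) (hfx : f x ≠ ⊤) (hpos : 0 < (f x).toReal - m)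
    (hlt : (f x).toReal - m < η) :
    ∃ z, (∀ y, f z ≤ f y) ∧ dist x z ≤ 2 * φ ((f x).toReal - m) := by
  -- this step size makes the first proximal step at most φ(f x - m) / 2 long
  set lam := φ ((f x).toReal - m) ^ 2 / (4 * ((f x).toReal - m))
  have hlam : 0 < lam := by have := hφ.pos ⟨hpos, hlt⟩; positivity
  choose prox hprox using
    hf.exists_isSubgradient_prox hlsc hm ⟨xb, hxb ▸ EReal.coe_ne_top m⟩ hlam
  have hxs : IsProximalSeq f lam (fun n => prox^[n] x) := fun n => by
    simp only [Function.iterate_succ_apply']; exact hprox _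
  exact hxs.exists_dist_le hlsc hm hlam hxb <| hxs.sum_range_dist_le hm hlam hfx hφ
    (fun n => (hxs.dist_le hm hlam hxb n).trans_lt hx) hKL hlt
    (le_of_eq (by rw [Function.iterate_zero_apply]; simp only [lam]; field_simp))

theorem stmt_0_general
    {X : Type*} [NormedAddCommGroup X] [InnerProductSpace ℝ X] [CompleteSpace X]
    (f : X → EReal)
    (hproper : (∀ x, f x ≠ ⊥) ∧ ∃ x, f x ≠ ⊤)
    (hlsc : LowerSemicontinuous f)
    (hconv : ∀ x y : X, ∀ t : ℝ, 0 ≤ t → t ≤ 1 →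
      f (t • x + (1 - t) • y) ≤ (t : EReal) * f x + ((1 - t : ℝ) : EReal) * f y)
    (S : Set X) (hS : S = {x | ∀ y, f x ≤ f y})
    (xb : X) (hxb : xb ∈ S)
    (r η : ℝ)
    (φ φ' : ℝ → ℝ)
    (hφ0 : φ 0 = 0)
    (hφconc : ConcaveOn ℝ (Ico 0 η) φ)
    (hφd : ∀ s ∈ Ioo 0 η, HasDerivAt φ (φ' s) s)
    (hφ'pos : ∀ s ∈ Ioo 0 η, 0 < φ' s)
    (hKL : ∀ x ∈ ball xb r, f xb < f x → f x < f xb + (η : EReal) →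
      ∀ ξ : X, (∀ y, f x + (((inner ℝ ξ (y - x) : ℝ)) : EReal) ≤ f y) →
        1 ≤ φ' ((f x).toReal - (f xb).toReal) * ‖ξ‖) :
    ∀ x ∈ ball xb r, f xb ≤ f x → f x < f xb + (η : EReal) →
      infDist x S ≤ 2 * φ ((f x).toReal - (f xb).toReal) := by
  obtain ⟨hbot, w, hw⟩ := hproper
  subst hS
  set m := (f xb).toReal
  have hfxb : f xb = m := (EReal.coe_toReal (ne_top_of_le_ne_top hw (hxb w)) (hbot xb)).symm
  have hm : ∀ z, (m : EReal) ≤ f z := hfxb ▸ hxb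
  intro x hx hlow hhigh
  rw [hfxb] at hlow hhigh
  have hfx : f x ≠ ⊤ := ne_top_of_lt hhigh
  have hfx_eq : f x = (f x).toReal := (EReal.coe_toReal hfx (hbot x)).symm
  have hlt : (f x).toReal - m < η := by
    rw [hfx_eq, ← EReal.coe_add, EReal.coe_lt_coe_iff] at hhigh; linarith
  rcases (sub_nonneg.2 (EReal.le_toReal_of_coe_le hlow hfx)).eq_or_lt with h0 | hpos
  · have hxS : x ∈ {x | ∀ y, f x ≤ f y} := fun y => by
      rw [hfx_eq, sub_eq_zero.1 h0.symm]; exact hm y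
    rw [infDist_zero_of_mem hxS, ← h0, hφ0, mul_zero]
  obtain ⟨z, hz, hdist⟩ := ConvexEReal.exists_minimizer_dist_le hconv hlsc hm hfxb
    ⟨hφ0, hφconc, hφd, hφ'pos⟩ (fun y hy hlow hhigh => hKL y hy (hfxb ▸ hlow) (hfxb ▸ hhigh))
    hx hfx hpos hlt
  exact (infDist_le_dist_of_mem (s := {x | ∀ y, f x ≤ f y}) hz).trans hdist

/-- KL condition implies growth error bound for proper lsc convex functions
(Theorem 2.1 / thm:KLGC). Here `f : X → EReal` with values in `(-∞, ∞]` ensured by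
properness, the convex subdifferential condition is stated pointwise, and
`d(0, ∂f(x)) ⬝ φ'(...) ≥ 1` is encoded as `1 ≤ φ'(...) * ‖ξ‖` for every subgradient ξ. -/
theorem stmt_0
    {X : Type*} [NormedAddCommGroup X] [InnerProductSpace ℝ X] [CompleteSpace X]
    (f : X → EReal)
    (hproper : (∀ x, f x ≠ ⊥) ∧ ∃ x, f x ≠ ⊤)
    (hlsc : LowerSemicontinuous f)
    (hconv : ∀ x y : X, ∀ t : ℝ, 0 ≤ t → t ≤ 1 →
      f (t • x + (1 - t) • y) ≤ (t : EReal) * f x + ((1 - t : ℝ) : EReal) * f y)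
    (S : Set X) (hS : S = {x | ∀ y, f x ≤ f y}) (hSne : S.Nonempty)
    (xb : X) (hxb : xb ∈ S)
    (r η : ℝ) (hr : 0 < r) (hη : 0 < η)
    (φ φ' : ℝ → ℝ)
    (hφc : ContinuousOn φ (Ico 0 η)) (hφ0 : φ 0 = 0)
    (hφconc : ConcaveOn ℝ (Ico 0 η) φ)
    (hφd : ∀ s ∈ Ioo 0 η, HasDerivAt φ (φ' s) s)
    (hφ'c : ContinuousOn φ' (Ioo 0 η))
    (hφ'pos : ∀ s ∈ Ioo 0 η, 0 < φ' s)
    (hKL : ∀ x ∈ ball xb r, f xb < f x → f x < f xb + (η : EReal) →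
      ∀ ξ : X, (∀ y, f x + (((inner ℝ ξ (y - x) : ℝ)) : EReal) ≤ f y) →
        1 ≤ φ' ((f x).toReal - (f xb).toReal) * ‖ξ‖) :
    ∀ x ∈ ball xb r, f xb ≤ f x → f x < f xb + (η : EReal) →
      infDist x S ≤ 2 * φ ((f x).toReal - (f xb).toReal) :=
  stmt_0_general f hproper hlsc hconv S hS xb hxb r η φ φ' hφ0 hφconc hφd hφ'pos hKL
end

section
/- Let φ ∈ C[0,η) ∩ C¹(0,η) be concave with φ(0) = 0 and φ' > 0 on (0,η). Suppose a_k, a_{k+1} ∈ [0, η), a_{k+1} ≤ a_k, and d_k, d_{k+1} ≥ 0 satisfy φ'(a_k) ≥ τ/d_k (with d_k > 0) and a_{k+1} + (1/(2τ)) d_{k+1}² ≤ a_k. Then 2 d_{k+1} ≤ d_k + 2(φ(a_k) - φ(a_{k+1})). -/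
open Set

/-!
Concavity bounds the drop `φ a - φ a'` below by `φ' a * (a - a') ≥ τ (a - a') / d`, while the
descent condition gives `d'² ≤ 2τ (a - a')`. Hence `d'² ≤ d · 2(φ a - φ a')`, and the claim is
AM-GM for `d` and `2(φ a - φ a')`.
-/

theorem ConcaveOn.mul_sub_le_sub_of_hasDerivAt {s : Set ℝ} {f : ℝ → ℝ} {f' x y : ℝ}
    (hf : ConcaveOn ℝ s f) (hx : x ∈ s) (hy : y ∈ s) (hxy : x < y) (hf' : HasDerivAt f f' y) :
    f' * (y - x) ≤ f y - f x := by
  have hslope := hf.le_slope_of_hasDerivAt hx hy hxy hf'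
  rwa [slope_def_field, le_div_iff₀ (sub_pos.2 hxy)] at hslope

theorem stmt_5_general
    (η τ : ℝ) (hτ : 0 < τ)
    (φ φ' : ℝ → ℝ)
    (hφconc : ConcaveOn ℝ (Ico 0 η) φ)
    (hφd : ∀ s ∈ Ioo 0 η, HasDerivAt φ (φ' s) s)
    (a a' d d' : ℝ)
    (ha : a ∈ Ico 0 η) (ha' : a' ∈ Ico 0 η) (haa : a' ≤ a)
    (hd : 0 < d)
    (hKL : τ / d ≤ φ' a)
    (hdesc : a' + 1/(2*τ) * d'^2 ≤ a) :
    2 * d' ≤ d + 2 * (φ a - φ a') := by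
  have hgap : d' ^ 2 ≤ 2 * τ * (a - a') := by
    rw [← div_le_iff₀' (by positivity), div_eq_inv_mul, ← one_div]
    linarith
  have hstep : τ * (a - a') ≤ d * (φ a - φ a') := by
    rcases haa.eq_or_lt with rfl | hlt
    · simp
    have hτd : τ ≤ d * φ' a := (div_le_iff₀' hd).1 hKL
    have hsecant := hφconc.mul_sub_le_sub_of_hasDerivAt ha' ha hlt
      (hφd a ⟨ha'.1.trans_lt hlt, ha.2⟩)
    calc τ * (a - a') ≤ d * φ' a * (a - a') := by gcongr
      _ ≤ d * (φ a - φ a') := by rw [mul_assoc]; gcongr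
  have hΔ : 0 ≤ φ a - φ a' :=
    nonneg_of_mul_nonneg_right ((mul_nonneg hτ.le (sub_nonneg.2 haa)).trans hstep) hd
  exact two_mul_le_add_of_sq_le_mul hd.le (by positivity) (by linarith)

/-- The key one-step estimate in the proximal point proof that KL implies the growth error
bound: if `φ'(a_k) ≥ τ/d_k` and `a_{k+1} + d_{k+1}²/(2τ) ≤ a_k`, then
`2 d_{k+1} ≤ d_k + 2(φ(a_k) - φ(a_{k+1}))`. -/
theorem stmt_5
    (η τ : ℝ) (hη : 0 < η) (hτ : 0 < τ)
    (φ φ' : ℝ → ℝ)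
    (hφc : ContinuousOn φ (Ico 0 η)) (hφ0 : φ 0 = 0)
    (hφconc : ConcaveOn ℝ (Ico 0 η) φ)
    (hφd : ∀ s ∈ Ioo 0 η, HasDerivAt φ (φ' s) s)
    (hφ'pos : ∀ s ∈ Ioo 0 η, 0 < φ' s)
    (a a' d d' : ℝ)
    (ha : a ∈ Ico 0 η) (ha' : a' ∈ Ico 0 η) (haa : a' ≤ a)
    (hd : 0 < d) (hd' : 0 ≤ d')
    (hKL : τ / d ≤ φ' a)
    (hdesc : a' + 1/(2*τ) * d'^2 ≤ a) :
    2 * d' ≤ d + 2 * (φ a - φ a') :=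
  stmt_5_general η τ hτ φ φ' hφconc hφd a a' d d' ha ha' haa hd hKL hdesc
end

section
/- Let {d_k}_{k≥0} be a sequence of nonnegative reals and {b_k}_{k≥0} a nonincreasing sequence of nonnegative reals such that 2 d_{k+1} ≤ d_k + 2(b_k - b_{k+1}) for all k ≥ 1. Then for every l ≥ 1, the partial sum ∑_{k=0}^{l-1} d_{k+1} ≤ 2 d_1 + 2 b_0; in particular ∑_{k=1}^∞ d_k ≤ 2 d_1 + 2 b_0 < ∞. -/
/-- Telescoping / finite-length argument: if `2 d_{k+1} ≤ d_k + 2(b_k - b_{k+1})` for `k ≥ 1`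
with `d_k ≥ 0` and `b_k ≥ 0` nonincreasing, then `∑_{k=0}^{l-1} d_{k+1} ≤ 2 d_1 + 2 b_0` for
every `l ≥ 1`, and consequently `∑_{k=1}^∞ d_k ≤ 2 d_1 + 2 b_0 < ∞`. -/
theorem stmt_6
    (d b : ℕ → ℝ)
    (hd : ∀ k, 0 ≤ d k) (hb : ∀ k, 0 ≤ b k)
    (hbmono : ∀ k, b (k+1) ≤ b k)
    (hrec : ∀ k, 1 ≤ k → 2 * d (k+1) ≤ d k + 2 * (b k - b (k+1))) :
    (∀ l, 1 ≤ l → ∑ k ∈ Finset.range l, d (k+1) ≤ 2 * d 1 + 2 * b 0) ∧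
    Summable (fun k => d (k+1)) ∧ ∑' k, d (k+1) ≤ 2 * d 1 + 2 * b 0 := by
  have key : ∀ l, 1 ≤ l →
      (∑ k ∈ Finset.range l, d (k+1)) + d l + 2 * b l ≤ 2 * d 1 + 2 * b 1 := by
    intro l hl
    induction l with
    | zero => omega
    | succ n ih =>
      rcases Nat.eq_or_lt_of_le hl with h | h
      · simp [← h]; nlinarith [hb 1, hd 1]
      · have hn : 1 ≤ n := by omega
        have := ih hn
        have hr := hrec n hn
        rw [Finset.sum_range_succ]
        nlinarith
  have bound : ∀ l, ∑ k ∈ Finset.range l, d (k+1) ≤ 2 * d 1 + 2 * b 0 := by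
    intro l
    rcases Nat.eq_zero_or_pos l with h | h
    · simp [h]; nlinarith [hd 1, hb 0]
    · have := key l h
      nlinarith [hb l, hd l, hbmono 0, hb 1]
  have hsum : Summable (fun k => d (k+1)) :=
    summable_of_sum_range_le (fun k => hd (k+1)) bound
  exact ⟨fun l _ => bound l, hsum, Summable.tsum_le_of_sum_range_le hsum bound⟩
end

section
/- Consider the adaptive heavy ball iteration x_{k+1} = x_k - α_k ∇f(x_k) + β_k (x_k - x_{k-1}) with x_{-1} = x_0, α_k = (1 + μ₀)/L for fixed 0 ≤ μ₀ < 1, and β_k chosen by Algorithm AHB (β_k minimizes t ↦ t²‖m_k‖² + 2t γ̃_k - 2α_k t⟨g_k, m_k⟩ over [0, β], where m_k = x_k - x_{k-1}, g_k = ∇f(x_k), and γ̃_k is defined by γ̃_0 = 0, γ̃_k = ‖m_k‖² - α_{k-1}(f(x_{k-1}) - f* + ‖g_{k-1}‖²/(2L)) + β_{k-1} γ̃_{k-1}). Suppose f is convex, continuously differentiable with L-Lipschitz gradient, and has minimum value f*. Then for any minimizer x̂ of f and all k ≥ 0, ‖x_{k+1} - x̂‖² ≤ ‖x_k - x̂‖²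 - (2(1 - μ₀²)/L)(f(x_k) - f*). -/
/-!
With `y_k = x_k - α ∇f(x_k)` the plain gradient step, `x_{k+1} - x̂ = (y_k - x̂) + β_k m_k`, so
`‖x_{k+1} - x̂‖² = ‖y_k - x̂‖² + β_k² ‖m_k‖² + 2 β_k ⟪m_k, x_k - x̂⟫ - 2 α β_k ⟪g_k, m_k⟫`.
By co-coercivity at the minimizer, `f x - f* + ‖∇f x‖² / (2L) ≤ ⟪∇f x, x - x̂⟫`, an induction shows
that `γ̃_k` dominates `⟪m_k, x_k - x̂⟫`; and since `β_k` minimizes `t² ‖m_k‖² + 2 t γ̃_k - 2 α t ⟪g_k, m_k⟫`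
over `[0, β]`, that quadratic is `≤ 0` at `β_k`. Hence the heavy ball step is no worse than the
gradient step with step size `α = (1 + μ₀) / L`, which decreases `‖x - x̂‖²` by
`2 α (2 - α L) (f x - f*) = 2 (1 - μ₀²) / L · (f x - f*)` because also `‖∇f x‖² ≤ 2 L (f x - f*)`.
-/

open scoped RealInnerProductSpace ENNReal
open Set

section Gradient

variable {E : Type*} [NormedAddCommGroup E] [InnerProductSpace ℝ E] [CompleteSpace E] {f : E → ℝ}

theorem IsLocalMin.gradient_eq_zero {a : E} (h : IsLocalMin f a) : gradient f a = 0 := by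
  simp [gradient, h.fderiv_eq_zero]

theorem Differentiable.hasDerivAt_comp_add_smul (hf : Differentiable ℝ f) (a v : E) (t : ℝ) :
    HasDerivAt (fun s : ℝ => f (a + s • v)) ⟪gradient f (a + t • v), v⟫ t := by
  have hline : HasDerivAt (fun s : ℝ => a + s • v) v t := by
    simpa using ((hasDerivAt_id t).smul_const v).const_add a
  have h := (hf _).hasGradientAt.hasFDerivAt.comp_hasDerivAt t hline
  rwa [InnerProductSpace.toDual_apply_apply] at h

theorem ConvexOn.add_inner_gradient_le (hconv : ConvexOn ℝ univ f) (hf : Differentiable ℝ f)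
    (a b : E) : f a + ⟪gradient f a, b - a⟫ ≤ f b := by
  have hline : ConvexOn ℝ univ (fun s : ℝ => f (a + s • (b - a))) := by
    simpa [Function.comp_def, AffineMap.lineMap_apply, add_comm]
      using hconv.comp_affineMap (AffineMap.lineMap a b : ℝ →ᵃ[ℝ] E)
  have hd := hf.hasDerivAt_comp_add_smul a (b - a) 0
  rw [zero_smul, add_zero] at hd
  have := hline.le_slope_of_hasDerivAt (mem_univ 0) (mem_univ 1) one_pos hd
  simp only [slope_def_field, one_smul, zero_smul, add_zero, add_sub_cancel, sub_zero,
    div_one] at this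
  linarith

theorem le_add_inner_gradient_add_sq_norm (hf : Differentiable ℝ f) {L : ℝ}
    (hlip : ∀ x y, ‖gradient f x - gradient f y‖ ≤ L * ‖x - y‖) (a b : E) :
    f b ≤ f a + ⟪gradient f a, b - a⟫ + L / 2 * ‖b - a‖ ^ 2 := by
  set v := b - a
  set ψ : ℝ → ℝ := fun t => f (a + t • v) - t * ⟪gradient f a, v⟫ - L / 2 * t ^ 2 * ‖v‖ ^ 2
  have hψ : ∀ t, HasDerivAt ψ
      (⟪gradient f (a + t • v), v⟫ - ⟪gradient f a, v⟫ - L * t * ‖v‖ ^ 2) t := by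
    intro t
    refine (((hf.hasDerivAt_comp_add_smul a v t).sub ((hasDerivAt_id t).mul_const
      ⟪gradient f a, v⟫)).sub (((hasDerivAt_pow 2 t).const_mul (L / 2)).mul_const
      (‖v‖ ^ 2))).congr_deriv ?_
    simp only [one_mul, Nat.cast_ofNat, Nat.add_one_sub_one, pow_one]
    ring
  have hanti : AntitoneOn ψ (Ici 0) := by
    refine antitoneOn_of_hasDerivWithinAt_nonpos (convex_Ici 0)
      (fun t _ => (hψ t).continuousAt.continuousWithinAt) (fun t _ => (hψ t).hasDerivWithinAt) ?_
    intro t ht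
    rw [interior_Ici, mem_Ioi] at ht
    have hgrad : ‖gradient f (a + t • v) - gradient f a‖ ≤ L * (t * ‖v‖) := by
      simpa [norm_smul, abs_of_pos ht] using hlip (a + t • v) a
    have := real_inner_le_norm (gradient f (a + t • v) - gradient f a) v
    rw [inner_sub_left] at this
    nlinarith [norm_nonneg v]
  have := hanti (mem_Ici.2 le_rfl) (mem_Ici.2 zero_le_one) zero_le_one
  simp only [ψ, v, add_sub_cancel, one_smul, zero_smul, add_zero, one_mul, one_pow, mul_one,
    zero_mul, sub_zero, ne_eq, OfNat.ofNat_ne_zero, not_false_eq_true, zero_pow, mul_zero] at this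
  linarith

theorem sq_norm_gradient_div_le_sub (hf : Differentiable ℝ f) {L : ℝ} (hL : 0 < L)
    (hlip : ∀ x y, ‖gradient f x - gradient f y‖ ≤ L * ‖x - y‖) {fstar : ℝ}
    (hfstar : ∀ y, fstar ≤ f y) (z : E) :
    ‖gradient f z‖ ^ 2 / (2 * L) ≤ f z - fstar := by
  have h := le_add_inner_gradient_add_sq_norm hf hlip z (z - L⁻¹ • gradient f z)
  rw [sub_sub_cancel_left, norm_neg, norm_smul, inner_neg_right, real_inner_smul_right,
    real_inner_self_eq_norm_sq, Real.norm_of_nonneg (inv_nonneg.2 hL.le)] at h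
  have hquad : L / 2 * (L⁻¹ * ‖gradient f z‖) ^ 2 - L⁻¹ * ‖gradient f z‖ ^ 2
      = -(‖gradient f z‖ ^ 2 / (2 * L)) := by
    field_simp
    ring
  linarith [hfstar (z - L⁻¹ • gradient f z)]

theorem sub_add_sq_norm_gradient_div_le_inner (hconv : ConvexOn ℝ univ f)
    (hf : Differentiable ℝ f) {L : ℝ} (hL : 0 < L)
    (hlip : ∀ x y, ‖gradient f x - gradient f y‖ ≤ L * ‖x - y‖) {xh : E}
    (hxh : ∀ y, f xh ≤ f y) (z : E) :
    f z - f xh + ‖gradient f z‖ ^ 2 / (2 * L) ≤ ⟪gradient f z, z - xh⟫ := by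
  set w := xh + L⁻¹ • gradient f z
  have hlow := hconv.add_inner_gradient_le hf z w
  have hup := le_add_inner_gradient_add_sq_norm hf hlip xh w
  rw [IsLocalMin.gradient_eq_zero (Filter.Eventually.of_forall hxh),
    inner_zero_left, add_sub_cancel_left, norm_smul,
    Real.norm_of_nonneg (inv_nonneg.2 hL.le)] at hup
  have hw : w - z = L⁻¹ • gradient f z - (z - xh) := by
    simp only [w]
    abel
  rw [hw, inner_sub_right, real_inner_smul_right, real_inner_self_eq_norm_sq] at hlow
  have hquad : L / 2 * (L⁻¹ * ‖gradient f z‖) ^ 2 - L⁻¹ * ‖gradient f z‖ ^ 2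
      = -(‖gradient f z‖ ^ 2 / (2 * L)) := by
    field_simp
    ring
  linarith

theorem norm_sub_smul_gradient_sub_sq_le (hconv : ConvexOn ℝ univ f)
    (hf : Differentiable ℝ f) {L : ℝ} (hL : 0 < L)
    (hlip : ∀ x y, ‖gradient f x - gradient f y‖ ≤ L * ‖x - y‖) {xh : E}
    (hxh : ∀ y, f xh ≤ f y) {α : ℝ} (hα : 1 ≤ α * L) (x : E) :
    ‖x - α • gradient f x - xh‖ ^ 2
      ≤ ‖x - xh‖ ^ 2 - 2 * α * (2 - α * L) * (f x - f xh) := by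
  have hα0 : 0 ≤ α := by nlinarith
  have hco := sub_add_sq_norm_gradient_div_le_inner hconv hf hL hlip hxh x
  have hsq := sq_norm_gradient_div_le_sub hf hL hlip hxh x
  have hexp : ‖x - α • gradient f x - xh‖ ^ 2 = ‖x - xh‖ ^ 2
      - 2 * α * ⟪gradient f x, x - xh⟫ + α ^ 2 * ‖gradient f x‖ ^ 2 := by
    rw [sub_right_comm, norm_sub_sq_real, inner_smul_right, real_inner_comm, norm_smul,
      Real.norm_of_nonneg hα0]
    ring
  rw [div_le_iff₀ (by positivity)] at hsq
  have hc : 0 ≤ α / L * (α * L - 1) := mul_nonneg (by positivity) (sub_nonneg.2 hα)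
  have hG := mul_le_mul_of_nonneg_left hsq hc
  have e1 : α / L * (α * L - 1) * ((f x - f xh) * (2 * L))
      = 2 * α * (α * L - 1) * (f x - f xh) := by
    field_simp
  have e2 : α ^ 2 * ‖gradient f x‖ ^ 2
      = α / L * (α * L - 1) * ‖gradient f x‖ ^ 2 + α / L * ‖gradient f x‖ ^ 2 := by
    field_simp
    ring
  have e3 : α * (‖gradient f x‖ ^ 2 / (2 * L)) = α / L * ‖gradient f x‖ ^ 2 / 2 := by ring
  rw [hexp]
  linarith [mul_le_mul_of_nonneg_left hco hα0]

end Gradient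

theorem sq_mul_le_mul_of_le_max_div {b c M : ℝ} (hb : 0 ≤ b) (hbc : b ≤ max 0 (c / M))
    (hM : 0 ≤ M) : b ^ 2 * M ≤ b * c := by
  rcases le_or_gt (c / M) 0 with hcM | hcM
  · obtain rfl : b = 0 := le_antisymm (hbc.trans (max_le le_rfl hcM)) hb
    simp
  · have hM : 0 < M := hM.lt_of_ne (by rintro rfl; simp at hcM)
    rw [max_eq_right hcM.le, le_div_iff₀ hM] at hbc
    nlinarith

/-- The momentum coefficient `β_k` of Algorithm AHB, with `M = ‖m_k‖²` and
`c = α_k⟪g_k, m_k⟫ - γ̃_k`: the minimizer of `t ↦ t² M - 2 t c` over `[0, β]`. -/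
noncomputable def clippedMomentum (β : ℝ≥0∞) (c M : ℝ) : ℝ :=
  (min (ENNReal.ofReal (max 0 (c / M))) β).toReal

theorem clippedMomentum_nonneg (β : ℝ≥0∞) (c M : ℝ) : 0 ≤ clippedMomentum β c M :=
  ENNReal.toReal_nonneg

theorem sq_clippedMomentum_mul_le (β : ℝ≥0∞) (c : ℝ) {M : ℝ} (hM : 0 ≤ M) :
    clippedMomentum β c M ^ 2 * M ≤ clippedMomentum β c M * c :=
  sq_mul_le_mul_of_le_max_div (clippedMomentum_nonneg β c M)
    (ENNReal.toReal_le_of_le_ofReal (le_max_left _ _) (min_le_left _ _)) hM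

section HeavyBall

variable {E : Type*} [NormedAddCommGroup E] [InnerProductSpace ℝ E]
  {x g m : ℕ → E} {α : ℝ} {b : ℕ → ℝ}

theorem inner_momentum_le_surrogate (hm0 : m 0 = 0) (hm : ∀ k, m (k + 1) = x (k + 1) - x k)
    (hx : ∀ k, x (k + 1) = x k - α • g k + b k • m k) (hb : ∀ k, 0 ≤ b k) {r γ : ℕ → ℝ}
    (hγ0 : γ 0 = 0) (hγ : ∀ k, γ (k + 1) = ‖m (k + 1)‖ ^ 2 - α * r k + b k * γ k) {xh : E}
    (hr : ∀ k, α * r k ≤ α * ⟪g k, x k - xh⟫) (k : ℕ) :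
    ⟪m k, x k - xh⟫ ≤ γ k := by
  induction k with
  | zero => rw [hm0, hγ0, inner_zero_left]
  | succ k ih =>
    have hxk : x (k + 1) - xh = m (k + 1) + (x k - xh) := by rw [hm k]; abel
    have hmk : m (k + 1) = b k • m k - α • g k := by rw [hm k, hx k]; abel
    have := mul_le_mul_of_nonneg_left ih (hb k)
    rw [hxk, inner_add_right, real_inner_self_eq_norm_sq, hγ k, hmk, inner_sub_left,
      real_inner_smul_left, real_inner_smul_left, ← hmk]
    linarith [hr k]

end HeavyBall

open Classical in
theorem stmt_16_general
    {d : ℕ} (f : EuclideanSpace ℝ (Fin d) → ℝ)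
    (hconv : ConvexOn ℝ Set.univ f) (hf : ContDiff ℝ 1 f)
    (L : ℝ) (hL : 0 < L)
    (hlip : ∀ x y, ‖gradient f x - gradient f y‖ ≤ L * ‖x - y‖)
    (fstar : ℝ) (hfstar : ∀ y, fstar ≤ f y)
    (μ₀ : ℝ) (hμ₀0 : 0 ≤ μ₀)
    (β : ℝ≥0∞)
    (αc : ℝ) (hαc : αc = (1 + μ₀) / L)
    (x g m : ℕ → EuclideanSpace ℝ (Fin d))
    (hg : ∀ k, g k = gradient f (x k))
    (hm0 : m 0 = 0)
    (hm : ∀ k, m (k+1) = x (k+1) - x k)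
    (βk : ℕ → ℝ) (γt : ℕ → ℝ)
    (hβk : ∀ k, βk k = if m k = 0 then 0 else
      (min (ENNReal.ofReal (max 0 ((αc * ⟪g k, m k⟫ - γt k) / ‖m k‖^2))) β).toReal)
    (hγt0 : γt 0 = 0)
    (hγt : ∀ k, γt (k+1)
      = ‖m (k+1)‖^2 - αc * (f (x k) - fstar + ‖g k‖^2 / (2*L)) + βk k * γt k)
    (hx : ∀ k, x (k+1) = x k - αc • g k + βk k • m k) :
    ∀ xh : EuclideanSpace ℝ (Fin d), f xh = fstar → ∀ k,
      ‖x (k+1) - xh‖^2 ≤ ‖x k - xh‖^2 - (2*(1 - μ₀^2)/L) * (f (x k) - fstar) := by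
  intro xh hxh k
  subst hxh
  have hdiff := hf.differentiable one_ne_zero
  have hα : 1 ≤ αc * L := by rw [hαc, div_mul_cancel₀ _ hL.ne']; linarith
  have hβk_clip : ∀ k, 0 ≤ βk k ∧ βk k ^ 2 * ‖m k‖ ^ 2 ≤ βk k * (αc * ⟪g k, m k⟫ - γt k) := by
    intro k
    rw [hβk k]
    split_ifs
    · simp
    · exact ⟨clippedMomentum_nonneg β _ _, sq_clippedMomentum_mul_le β _ (sq_nonneg _)⟩
  have hγ := inner_momentum_le_surrogate hm0 hm hx (fun k => (hβk_clip k).1) hγt0 hγt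
    (r := fun k => f (x k) - f xh + ‖g k‖ ^ 2 / (2 * L)) (xh := xh) (fun k => by
      rw [hg k]
      exact mul_le_mul_of_nonneg_left
        (sub_add_sq_norm_gradient_div_le_inner hconv hdiff hL hlip hfstar _)
        (by rw [hαc]; positivity)) k
  have hstep := norm_sub_smul_gradient_sub_sq_le hconv hdiff hL hlip hfstar hα (x k)
  rw [← hg k] at hstep
  have hβγ := mul_le_mul_of_nonneg_left hγ (hβk_clip k).1
  calc ‖x (k + 1) - xh‖ ^ 2
      = ‖x k - αc • g k - xh‖ ^ 2 + (βk k ^ 2 * ‖m k‖ ^ 2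
          + 2 * βk k * ⟪m k, x k - xh⟫ - 2 * αc * βk k * ⟪g k, m k⟫) := by
        rw [hx k, add_sub_right_comm, norm_add_sq_real, norm_smul, real_inner_smul_right,
          sub_right_comm, inner_sub_left, real_inner_smul_left, Real.norm_eq_abs, mul_pow, sq_abs,
          real_inner_comm (m k)]
        ring
    _ ≤ ‖x k - αc • g k - xh‖ ^ 2 := by
        linarith [hβk_clip k, mul_nonneg (sq_nonneg (βk k)) (sq_nonneg ‖m k‖)]
    _ ≤ _ := hstep.trans_eq (by rw [hαc]; field_simp; ring)

open Classical in
/-- Key descent estimate for the adaptive heavy ball method (Lemma 4.2 / AHB.lem2):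
for the AHB iteration `x_{k+1} = x_k - α_k ∇f(x_k) + β_k (x_k - x_{k-1})` with
`α_k = (1+μ₀)/L`, `β_k` given by the adaptive formula based on the surrogate `γ̃_k`,
and any minimizer `x̂` (i.e. `f x̂ = f*`),
`‖x_{k+1} - x̂‖² ≤ ‖x_k - x̂‖² - (2(1-μ₀²)/L)(f(x_k) - f*)`. -/
theorem stmt_16
    {d : ℕ} (f : EuclideanSpace ℝ (Fin d) → ℝ)
    (hconv : ConvexOn ℝ Set.univ f) (hf : ContDiff ℝ 1 f)
    (L : ℝ) (hL : 0 < L)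
    (hlip : ∀ x y, ‖gradient f x - gradient f y‖ ≤ L * ‖x - y‖)
    (fstar : ℝ) (hfstar : ∀ y, fstar ≤ f y)
    (μ₀ : ℝ) (hμ₀0 : 0 ≤ μ₀) (hμ₀1 : μ₀ < 1)
    (β : ℝ≥0∞) (hβ : 0 < β)
    (αc : ℝ) (hαc : αc = (1 + μ₀) / L)
    (x g m : ℕ → EuclideanSpace ℝ (Fin d))
    (hg : ∀ k, g k = gradient f (x k))
    (hm0 : m 0 = 0)
    (hm : ∀ k, m (k+1) = x (k+1) - x k)
    (βk : ℕ → ℝ) (γt : ℕ → ℝ)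
    (hβk : ∀ k, βk k = if m k = 0 then 0 else
      (min (ENNReal.ofReal (max 0 ((αc * ⟪g k, m k⟫ - γt k) / ‖m k‖^2))) β).toReal)
    (hγt0 : γt 0 = 0)
    (hγt : ∀ k, γt (k+1)
      = ‖m (k+1)‖^2 - αc * (f (x k) - fstar + ‖g k‖^2 / (2*L)) + βk k * γt k)
    (hx : ∀ k, x (k+1) = x k - αc • g k + βk k • m k) :
    ∀ xh : EuclideanSpace ℝ (Fin d), f xh = fstar → ∀ k,
      ‖x (k+1) - xh‖^2 ≤ ‖x k - xh‖^2 - (2*(1 - μ₀^2)/L) * (f (x k) - fstar) :=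
  stmt_16_general f hconv hf L hL hlip fstar hfstar μ₀ hμ₀0 β αc hαc x g m hg hm0 hm βk γt hβk hγt0
    hγt hx
end

section
/- Let {x_k} ⊂ ℝᵈ satisfy ‖x_{k+1} - x†‖² ≤ ‖x_k - x†‖² - c₀(f(x_k) - f*) for some c₀ > 0 and some x† ∈ S = argmin f, and suppose ‖x_k - x†‖ ≤ 2 d(x_k, S) for all k and the growth bound κ [d(x,S)]^α ≤ f(x) - f* holds on a ball containing all iterates, with κ > 0 and α ≥ 2. If α = 2 then ‖x_{k+1} - x†‖² ≤ (1 - c₀κ/4)‖x_k - x†‖² for all k; if α > 2 then there is C > 0 with ‖x_k - x†‖ ≤ C (k+1)^{-1/(α-2)} for all k. -/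
/-!
Writing `Δₖ = ‖xₖ - x†‖²`, the comparison `‖xₖ - x†‖ ≤ 2 d(xₖ, S)` and the growth bound turn the
descent inequality into `Δₖ₊₁ ≤ Δₖ - C Δₖ^θ` with `C = c₀κ/2^α` and `θ = α/2`. For `θ = 1` this is
linear convergence. For `θ > 1`, with `p = θ - 1`, Bernoulli's inequality `(1 - t)^(-p) ≥ 1 + pt`
shows that `Δₖ^(-p)` grows by at least `pC` per step, hence linearly in `k`, which is the rate
`Δₖ = O((k+1)^(-1/p))`.
-/

open Metric Real

lemma one_add_mul_le_one_sub_rpow_neg {p t : ℝ} (hp : 0 ≤ p) (ht : t < 1) :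
    1 + p * t ≤ (1 - t) ^ (-p) := by
  have hlog : log (1 - t) ≤ -t := by linarith [log_le_sub_one_of_pos (sub_pos.2 ht)]
  calc 1 + p * t ≤ exp (p * t) := by linarith [add_one_le_exp (p * t)]
    _ ≤ exp (log (1 - t) * -p) := exp_le_exp.2 (by nlinarith)
    _ = (1 - t) ^ (-p) := (rpow_def_of_pos (sub_pos.2 ht) _).symm

lemma rpow_neg_add_le_of_le_sub_mul_rpow {a b C p : ℝ} (hp : 0 < p) (ha : 0 ≤ a) (hb : 0 < b)
    (hab : b ≤ a - C * a ^ (p + 1)) : a ^ (-p) + p * C ≤ b ^ (-p) := by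
  set t := C * a ^ p with ht_def
  have hab' : b ≤ a * (1 - t) := by
    rw [rpow_add_one' ha (by positivity)] at hab
    linarith
  have ha' : 0 < a := lt_of_le_of_ne ha (by rintro rfl; linarith)
  have ht : t < 1 := by nlinarith
  calc a ^ (-p) + p * C = a ^ (-p) * (1 + p * t) := by
        have := (rpow_pos_of_pos ha' p).ne'
        rw [rpow_neg ha, ht_def]
        field_simp
    _ ≤ a ^ (-p) * (1 - t) ^ (-p) := by
        gcongr
        exact one_add_mul_le_one_sub_rpow_neg hp.le ht
    _ = (a * (1 - t)) ^ (-p) := (mul_rpow ha (sub_pos.2 ht).le).symm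
    _ ≤ b ^ (-p) := rpow_le_rpow_of_nonpos hb hab' (neg_nonpos.2 hp.le)

theorem exists_le_mul_rpow_of_le_sub_mul_rpow {Δ : ℕ → ℝ} {C θ : ℝ} (hC : 0 < C) (hθ : 1 < θ)
    (hΔ : ∀ k, 0 ≤ Δ k) (hrec : ∀ k, Δ (k + 1) ≤ Δ k - C * Δ k ^ θ) :
    ∃ M : ℝ, 0 < M ∧ ∀ k : ℕ, Δ k ≤ M * ((k : ℝ) + 1) ^ (-(1 / (θ - 1))) := by
  set p := θ - 1
  have hp : 0 < p := sub_pos.2 hθ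
  have hanti : Antitone Δ := antitone_nat_of_succ_le fun k =>
    (hrec k).trans (sub_le_self _ (mul_nonneg hC.le (rpow_nonneg (hΔ k) _)))
  have hgrowth : ∀ k : ℕ, 0 < Δ k → Δ 0 ^ (-p) + k * (p * C) ≤ Δ k ^ (-p) := by
    intro k
    induction k with
    | zero => simp
    | succ k ih =>
      intro hk
      have hstep := rpow_neg_add_le_of_le_sub_mul_rpow hp (hΔ k) hk
        (by rw [sub_add_cancel]; exact hrec k)
      push_cast
      linarith [ih (hk.trans_le (hanti k.le_succ))]
  rcases (hΔ 0).eq_or_lt with h0 | h0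
  · refine ⟨1, one_pos, fun k => ?_⟩
    have : Δ k ≤ 0 := h0 ▸ hanti (Nat.zero_le k)
    linarith [rpow_nonneg (by positivity : (0 : ℝ) ≤ k + 1) (-(1 / p))]
  set m := min (Δ 0 ^ (-p)) (p * C)
  have hm : 0 < m := lt_min (rpow_pos_of_pos h0 _) (mul_pos hp hC)
  refine ⟨m ^ (-(1 / p)), rpow_pos_of_pos hm _, fun k => ?_⟩
  rcases (hΔ k).eq_or_lt with hk | hk
  · rw [← hk]; positivity
  have hmk : m * (k + 1) ≤ Δ k ^ (-p) := by
    calc m * (k + 1) = m + k * m := by ring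
      _ ≤ Δ 0 ^ (-p) + k * (p * C) := by
        gcongr
        exacts [min_le_left _ _, min_le_right _ _]
      _ ≤ Δ k ^ (-p) := hgrowth k hk
  rw [← mul_rpow hm.le (by positivity), one_div, ← inv_neg]
  exact (le_rpow_inv_iff_of_neg hk (by positivity) (neg_neg_of_pos hp)).2 hmk

lemma sq_le_sq_sub_mul_rpow_of_growth {r r' δ gap c₀ κ α : ℝ} (hc₀ : 0 ≤ c₀) (hκ : 0 ≤ κ)
    (hα : 0 ≤ α) (hr : 0 ≤ r) (hdesc : r' ^ 2 ≤ r ^ 2 - c₀ * gap) (hcmp : r ≤ 2 * δ)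
    (hgrowth : κ * δ ^ α ≤ gap) :
    r' ^ 2 ≤ r ^ 2 - c₀ * κ / 2 ^ α * (r ^ 2) ^ (α / 2) := by
  have hpow : (r ^ 2) ^ (α / 2) / 2 ^ α = (r / 2) ^ α := by
    rw [← rpow_natCast, ← rpow_mul hr, div_rpow hr zero_le_two]
    push_cast
    ring_nf
  have hδ : (r / 2) ^ α ≤ δ ^ α := rpow_le_rpow (by positivity) (by linarith) hα
  calc r' ^ 2 ≤ r ^ 2 - c₀ * (κ * δ ^ α) := by nlinarith
    _ ≤ r ^ 2 - c₀ * κ / 2 ^ α * (r ^ 2) ^ (α / 2) := by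
        rw [div_mul_eq_mul_div, mul_div_assoc, hpow, mul_assoc]
        gcongr

theorem stmt_19_general
    {d : ℕ} (f : EuclideanSpace ℝ (Fin d) → ℝ)
    (S : Set (EuclideanSpace ℝ (Fin d)))
    (xd : EuclideanSpace ℝ (Fin d))
    (c₀ : ℝ) (hc₀ : 0 < c₀)
    (x : ℕ → EuclideanSpace ℝ (Fin d))
    (hdesc : ∀ k, ‖x (k+1) - xd‖^2 ≤ ‖x k - xd‖^2 - c₀ * (f (x k) - f xd))
    (hcmp : ∀ k, ‖x k - xd‖ ≤ 2 * infDist (x k) S)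
    (κ α R : ℝ) (hκ : 0 < κ) (hα : 2 ≤ α)
    (hiter : ∀ k, x k ∈ ball xd R)
    (hgrowth : ∀ y ∈ ball xd R, κ * (infDist y S) ^ α ≤ f y - f xd) :
    (α = 2 → ∀ k, ‖x (k+1) - xd‖^2 ≤ (1 - c₀ * κ / 4) * ‖x k - xd‖^2) ∧
    (2 < α → ∃ C : ℝ, 0 < C ∧ ∀ k : ℕ,
      ‖x k - xd‖ ≤ C * ((k : ℝ) + 1) ^ (-(1/(α - 2)))) := by
  have hrec (k : ℕ) :
      ‖x (k+1) - xd‖^2 ≤ ‖x k - xd‖^2 - c₀ * κ / 2 ^ α * (‖x k - xd‖^2) ^ (α / 2) :=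
    sq_le_sq_sub_mul_rpow_of_growth hc₀.le hκ.le (by linarith) (norm_nonneg _) (hdesc k)
      (hcmp k) (hgrowth _ (hiter k))
  refine ⟨?_, fun hα2 => ?_⟩
  · rintro rfl k
    have := hrec k
    norm_num at this
    linarith
  · obtain ⟨M, hM, hbound⟩ := exists_le_mul_rpow_of_le_sub_mul_rpow
      (Δ := fun k => ‖x k - xd‖ ^ 2) (by positivity) (by linarith : 1 < α / 2)
      (fun k => sq_nonneg _) hrec
    refine ⟨√M, by positivity, fun k => ?_⟩
    rw [← sq_le_sq₀ (norm_nonneg _) (by positivity), mul_pow, sq_sqrt hM.le,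
      ← rpow_mul_natCast (by positivity)]
    have hexp : -(1 / (α - 2)) * ((2 : ℕ) : ℝ) = -(1 / (α / 2 - 1)) := by
      have : α - 2 ≠ 0 := by linarith
      field_simp
      ring
    exact hexp ▸ hbound k

/-- Convergence rates under a Hölder growth bound: given the descent inequality
`‖x_{k+1} - x†‖² ≤ ‖x_k - x†‖² - c₀(f(x_k) - f*)`, the comparison
`‖x_k - x†‖ ≤ 2 d(x_k, S)`, and the growth bound `κ d(·,S)^α ≤ f - f*` on a ball
containing all iterates (κ > 0, α ≥ 2): if `α = 2` one gets linear convergence with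
factor `1 - c₀κ/4`, and if `α > 2` one gets `‖x_k - x†‖ ≤ C (k+1)^{-1/(α-2)}`. -/
theorem stmt_19
    {d : ℕ} (f : EuclideanSpace ℝ (Fin d) → ℝ)
    (S : Set (EuclideanSpace ℝ (Fin d)))
    (hS : S = {y | IsMinOn f Set.univ y})
    (xd : EuclideanSpace ℝ (Fin d)) (hxd : xd ∈ S)
    (c₀ : ℝ) (hc₀ : 0 < c₀)
    (x : ℕ → EuclideanSpace ℝ (Fin d))
    (hdesc : ∀ k, ‖x (k+1) - xd‖^2 ≤ ‖x k - xd‖^2 - c₀ * (f (x k) - f xd))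
    (hcmp : ∀ k, ‖x k - xd‖ ≤ 2 * infDist (x k) S)
    (κ α R : ℝ) (hκ : 0 < κ) (hα : 2 ≤ α)
    (hiter : ∀ k, x k ∈ ball xd R)
    (hgrowth : ∀ y ∈ ball xd R, κ * (infDist y S) ^ α ≤ f y - f xd) :
    (α = 2 → ∀ k, ‖x (k+1) - xd‖^2 ≤ (1 - c₀ * κ / 4) * ‖x k - xd‖^2) ∧
    (2 < α → ∃ C : ℝ, 0 < C ∧ ∀ k : ℕ,
      ‖x k - xd‖ ≤ C * ((k : ℝ) + 1) ^ (-(1/(α - 2)))) :=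
  stmt_19_general f S xd c₀ hc₀ x hdesc hcmp κ α R hκ hα hiter hgrowth
end
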